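/- arXiv:1006.3895 — 3 statements merged into one kernel-verified Lean document; each statement's English description precedes it below -/
import Mathlib

section
/- The complex Gaussian integral formula: for any real r > 0 and any complex s, the integral over the real line of exp(πi(r x² + s x)) dx equals e^{πi/4} · e^{-πi s²/(4r)} / √r (interpreted as an improper/oscillatory integral, e.g. as the limit of integrals of exp(πi(r x² + sx) - εx²) as ε → 0⁺). -/
/-!
For `ε > 0` the regularized integrand is the genuine Gaussian `exp ((b - ε) x² + c x)` with
`b = π i r`, `c = π i s`, whose integral is `(π / (ε - b)) ^ (1/2) * exp (-c² / (4 (b - ε)))`.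
This closed form is continuous at `ε = 0`: for `Re b ≤ 0`, `b ≠ 0` the base `π / -b` stays off
the branch cut of the square root. At `b = π i r` it equals `e^{πi/4} e^{-πi s²/(4r)} / √r`.
-/

open MeasureTheory Real Complex Filter

lemma pi_div_neg_mem_slitPlane {b : ℂ} (hb : b.re ≤ 0) (hb0 : b ≠ 0) :
    (π : ℂ) / -b ∈ slitPlane := by
  have hnorm : 0 < normSq b := normSq_pos.2 hb0
  rw [mem_slitPlane_iff, div_re, div_im]
  simp only [ofReal_re, ofReal_im, neg_re, neg_im, normSq_neg, zero_mul]
  rcases hb.lt_or_eq with hre | hre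
  · left
    have : 0 < π * -b.re := mul_pos pi_pos (neg_pos.2 hre)
    positivity
  · right
    have him : b.im ≠ 0 := fun him => hb0 (Complex.ext hre him)
    field_simp
    simp [pi_ne_zero, him, hb0]

lemma continuousAt_gaussian_integral_closed_form {b : ℂ} (hb : b.re ≤ 0) (hb0 : b ≠ 0) (c : ℂ) :
    ContinuousAt (fun β : ℂ => (π / -β) ^ (1 / 2 : ℂ) * cexp (-c ^ 2 / (4 * β))) b := by
  refine ContinuousAt.mul ?_ ?_
  · exact (continuousAt_const.div continuousAt_id.neg (neg_ne_zero.2 hb0)).cpow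
      continuousAt_const (pi_div_neg_mem_slitPlane hb hb0)
  · exact (continuousAt_const.div (continuousAt_const.mul continuousAt_id)
      (mul_ne_zero (by norm_num) hb0)).cexp

theorem tendsto_integral_cexp_quadratic_mul_cexp_neg_mul_sq {b : ℂ} (hb : b.re ≤ 0) (hb0 : b ≠ 0)
    (c : ℂ) :
    Tendsto (fun ε : ℝ => ∫ x : ℝ, cexp (b * x ^ 2 + c * x) * cexp (-ε * x ^ 2))
      (nhdsWithin 0 (Set.Ioi 0)) (nhds ((π / -b) ^ (1 / 2 : ℂ) * cexp (-c ^ 2 / (4 * b)))) := by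
  have hshift : Tendsto (fun ε : ℝ => b - ε) (nhdsWithin 0 (Set.Ioi 0)) (nhds b) := by
    have : Continuous fun ε : ℝ => b - ε := by fun_prop
    simpa using (this.tendsto 0).mono_left nhdsWithin_le_nhds
  refine ((continuousAt_gaussian_integral_closed_form hb hb0 c).tendsto.comp hshift).congr' ?_
  filter_upwards [self_mem_nhdsWithin] with ε (hε : 0 < ε)
  have hre : (b - ε).re < 0 := by simp only [sub_re, ofReal_re]; linarith
  have hquad (x : ℝ) : cexp (b * x ^ 2 + c * x) * cexp (-ε * x ^ 2) =
      cexp ((b - ε) * x ^ 2 + c * x + 0) := by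
    rw [← Complex.exp_add]
    ring_nf
  simp only [Function.comp_apply, hquad, integral_cexp_quadratic hre, zero_sub, neg_div]

lemma I_div_ofReal_cpow_one_half {r : ℝ} (hr : 0 < r) :
    (I / r) ^ (1 / 2 : ℂ) = cexp (π * I / 4) / (√r : ℂ) := by
  have hlog : log (I / r) = π / 2 * I - Real.log r := by
    rw [div_eq_mul_inv, ← ofReal_inv, log_mul_ofReal _ (inv_pos.2 hr) _ I_ne_zero, log_I,
      Real.log_inv]
    push_cast
    ring
  have hsqrt : √r = Real.exp (Real.log r / 2) := by
    rw [Real.sqrt_eq_rpow, Real.rpow_def_of_pos hr]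
    ring_nf
  rw [cpow_def_of_ne_zero (div_ne_zero I_ne_zero (ofReal_ne_zero.2 hr.ne')), hlog, hsqrt,
    ofReal_exp, ← Complex.exp_sub]
  push_cast
  ring_nf

/-- Complex Gaussian (Fresnel) integral formula, with Gaussian regularization:
for `r > 0` real and `s ∈ ℂ`,
`lim_{ε→0⁺} ∫ exp(πi(r x² + s x)) e^{-εx²} dx = e^{πi/4} e^{-πi s²/(4r)} / √r`. -/
theorem fresnel_gaussian_integral (r : ℝ) (hr : 0 < r) (s : ℂ) :
    Tendsto
      (fun ε : ℝ => ∫ x : ℝ,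
        Complex.exp ((π : ℂ) * Complex.I * (r * (x : ℂ) ^ 2 + s * x)) *
          Complex.exp (-(ε : ℂ) * (x : ℂ) ^ 2))
      (nhdsWithin 0 (Set.Ioi 0))
      (nhds (Complex.exp ((π : ℂ) * Complex.I / 4) *
        Complex.exp (-(π : ℂ) * Complex.I * s ^ 2 / (4 * (r : ℂ))) / (Real.sqrt r : ℂ))) := by
  have hb0 : (π * I * r : ℂ) ≠ 0 := by simp [pi_ne_zero, hr.ne']
  have hlim := tendsto_integral_cexp_quadratic_mul_cexp_neg_mul_sq (by simp) hb0 (π * I * s)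
  have hbase : (π : ℂ) / -(π * I * r) = I / r := by
    rw [div_eq_div_iff (neg_ne_zero.2 hb0) (ofReal_ne_zero.2 hr.ne')]
    linear_combination (π : ℂ) * r * I_sq
  have hexp : -(π * I * s) ^ 2 / (4 * (π * I * r)) = -π * I * s ^ 2 / (4 * r) := by
    field_simp
  rw [hbase, I_div_ofReal_cpow_one_half hr, hexp, div_mul_eq_mul_div] at hlim
  convert hlim using 4 with ε x
  ring_nf
end

section
/- Let a > 0 and define kernels k(x,y) = e^{πi(x-y)² + 2πa(x-y)} and K(x,y) = e^{-πi(x-y)² - 2πa(x-y)}. Then for all real x, X: ∫_ℝ k(x,y) K(X,y) dy = δ(x - X) as distributions; concretely, for every test function f in the Gaussian-polynomial class W, ∫_ℝ (∫_ℝ k(x,y) K(X,y) f(X) dX) dy = f(x). -/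
open MeasureTheory Real Complex Filter

/-- The Gaussian-polynomial test class `W`. -/
def InW (f : ℝ → ℂ) : Prop :=
  f ∈ Submodule.span ℂ {g : ℝ → ℂ | ∃ (A : ℝ) (B : ℂ) (P : Polynomial ℂ), 0 < A ∧
    g = fun x : ℝ => Complex.exp (-(A : ℂ) * (x : ℂ) ^ 2 / 2 + B * x) * P.eval (x : ℂ)}

/-- `k(x,y) = e^{πi(x-y)² + 2πa(x-y)}`. -/
noncomputable def kker (a x y : ℝ) : ℂ :=
  Complex.exp ((π : ℂ) * Complex.I * ((x : ℂ) - y) ^ 2 + 2 * (π : ℂ) * a * ((x : ℂ) - y))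

/-- `K(x,y) = e^{-πi(x-y)² - 2πa(x-y)}`. -/
noncomputable def Kker (a x y : ℝ) : ℂ :=
  Complex.exp (-(π : ℂ) * Complex.I * ((x : ℂ) - y) ^ 2 - 2 * (π : ℂ) * a * ((x : ℂ) - y))

/-!
Combining the two kernels, `k(x,y) K(X,y) = e^{-2πi(x-X)y} g(X)` with
`g(X) = e^{πi(x²-X²) + 2πa(x-X)} f(X)` and `g(x) = f(x)`. With the regulariser `e^{-εy²}`
everything is absolutely integrable, so Fubini and the Fourier transform of a Gaussian turn the
iterated integral into `∫ (π/ε)^{1/2} e^{-π²(x-X)²/ε} g(X) dX`, the heat kernel at time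
`ε/(4π²)` applied to `g`; this tends to `g(x)` as `ε → 0⁺`. Integrability of `g` holds because
members of `W` are continuous and stay integrable after multiplication by any `e^{-bX² + cX}`
with `re b ≥ 0`, which covers the chirp `e^{-πiX²}`.
-/

open scoped Nat

lemma norm_pow_le_factorial_mul_exp_add_exp_neg (X : ℝ) (n : ℕ) :
    ‖(X : ℂ) ^ n‖ ≤ n ! * (Real.exp X + Real.exp (-X)) := by
  have hexp : Real.exp |X| ≤ Real.exp X + Real.exp (-X) := by
    rcases abs_choice X with h | h <;> rw [h] <;> linarith [Real.exp_pos X, Real.exp_pos (-X)]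
  have hpow := Real.pow_div_factorial_le_exp _ (abs_nonneg X) n
  rw [div_le_iff₀ (by positivity)] at hpow
  rw [norm_pow, Complex.norm_real, Real.norm_eq_abs]
  nlinarith [(Nat.cast_pos.2 (Nat.factorial_pos n) : (0:ℝ) < n !)]

lemma integrable_pow_mul_cexp_quadratic {b : ℂ} (hb : 0 < b.re) (c : ℂ) (n : ℕ) :
    Integrable fun X : ℝ => (X : ℂ) ^ n * cexp (-b * X ^ 2 + c * X) := by
  have hshift (s : ℝ) :
      Integrable fun X : ℝ => Real.exp (s * X) * ‖cexp (-b * X ^ 2 + c * X)‖ := by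
    refine (integrable_cexp_quadratic hb (c + s) 0).norm.congr (ae_of_all _ fun X => ?_)
    simp only [Complex.norm_exp, ← Real.exp_add, add_zero, add_re, mul_re, ofReal_re, ofReal_im]
    ring_nf
  have hbound := ((hshift 1).add (hshift (-1))).const_mul (n ! : ℝ)
  refine hbound.mono' (by fun_prop) (ae_of_all _ fun X => ?_)
  simp only [Pi.add_apply, norm_mul, one_mul, neg_one_mul]
  rw [← add_mul, ← mul_assoc]
  exact mul_le_mul_of_nonneg_right (norm_pow_le_factorial_mul_exp_add_exp_neg X n) (norm_nonneg _)

lemma integrable_eval_mul_cexp_quadratic {b : ℂ} (hb : 0 < b.re) (c : ℂ) (P : Polynomial ℂ) :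
    Integrable fun X : ℝ => P.eval (X : ℂ) * cexp (-b * X ^ 2 + c * X) := by
  induction P using Polynomial.induction_on' with
  | add p q hp hq =>
    simp only [Polynomial.eval_add, add_mul]
    exact hp.add hq
  | monomial n a =>
    simpa only [Polynomial.eval_monomial, mul_assoc] using
      (integrable_pow_mul_cexp_quadratic hb c n).const_mul a

def expQuadIntegrable : Submodule ℂ (ℝ → ℂ) where
  carrier := {f | Continuous f ∧
    ∀ b c : ℂ, 0 ≤ b.re → Integrable fun X : ℝ => cexp (-b * X ^ 2 + c * X) * f X}
  add_mem' := fun ⟨hf, hfi⟩ ⟨hg, hgi⟩ =>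
    ⟨hf.add hg, fun b c hb => by
      simp only [Pi.add_apply, mul_add]
      exact (hfi b c hb).add (hgi b c hb)⟩
  zero_mem' := ⟨continuous_const, fun _ _ _ => by simp⟩
  smul_mem' := fun r f ⟨hf, hfi⟩ =>
    ⟨hf.const_smul r, fun b c hb => by
      simpa only [Pi.smul_apply, smul_eq_mul, mul_left_comm] using (hfi b c hb).const_mul r⟩

lemma mem_expQuadIntegrable {f : ℝ → ℂ} : f ∈ expQuadIntegrable ↔ Continuous f ∧
    ∀ b c : ℂ, 0 ≤ b.re → Integrable fun X : ℝ => cexp (-b * X ^ 2 + c * X) * f X :=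
  Iff.rfl

lemma InW.mem_expQuadIntegrable {f : ℝ → ℂ} (hf : InW f) : f ∈ expQuadIntegrable := by
  refine Submodule.span_le.2 ?_ hf
  rintro _ ⟨A, B, P, hA, rfl⟩
  refine _root_.mem_expQuadIntegrable.2 ⟨by fun_prop, fun b c hb => ?_⟩
  have hre : 0 < (b + A / 2).re := by simp; linarith
  refine (integrable_eval_mul_cexp_quadratic hre (c + B) P).congr (ae_of_all _ fun X => ?_)
  dsimp only
  rw [← mul_assoc, ← Complex.exp_add, mul_comm]
  ring_nf

lemma kker_mul_Kker (a x X y : ℝ) :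
    kker a x y * Kker a X y =
      cexp (-2 * π * I * (x - X) * y) * cexp (π * I * (x ^ 2 - X ^ 2) + 2 * π * a * (x - X)) := by
  simp only [kker, Kker, ← Complex.exp_add]
  ring_nf

lemma norm_cexp_neg_two_pi_I_mul (x X y : ℝ) : ‖cexp (-2 * π * I * (x - X) * y)‖ = 1 := by
  rw [← Complex.norm_exp_ofReal_mul_I (-2 * π * (x - X) * y)]
  push_cast
  ring_nf

lemma integral_gaussian_mul_fourierChar {ε : ℝ} (hε : 0 < ε) (ξ : ℂ) :
    ∫ y : ℝ, cexp (-ε * y ^ 2) * cexp (-2 * π * I * ξ * y) =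
      (π / ε) ^ (1 / 2 : ℂ) * cexp (-π ^ 2 * ξ ^ 2 / ε) := by
  have hε' : 0 < (ε : ℂ).re := by simpa using hε
  convert fourierIntegral_gaussian hε' (-2 * π * ξ) using 1
  · congr 1 with y
    rw [mul_comm]
    ring_nf
  · ring_nf

lemma integral_gaussian_mul_integral_fourierChar {g : ℝ → ℂ} (hg : Integrable g) {ε : ℝ}
    (hε : 0 < ε) (x : ℝ) :
    ∫ y : ℝ, cexp (-ε * y ^ 2) * ∫ X : ℝ, cexp (-2 * π * I * (x - X) * y) * g X =
      ∫ X : ℝ, (π / ε) ^ (1 / 2 : ℂ) * cexp (-π ^ 2 * (x - X) ^ 2 / ε) * g X := by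
  have hF : Integrable (Function.uncurry fun (y X : ℝ) =>
      cexp (-ε * y ^ 2) * (cexp (-2 * π * I * (x - X) * y) * g X)) (volume.prod volume) := by
    refine ((integrable_exp_neg_mul_sq hε).mul_prod hg.norm).mono' ?_ (ae_of_all _ fun p => ?_)
    · exact (Continuous.aestronglyMeasurable (by fun_prop)).mul
        ((Continuous.aestronglyMeasurable (by fun_prop)).mul hg.aestronglyMeasurable.comp_snd)
    · rw [Function.uncurry_apply_pair, norm_mul, norm_mul, norm_cexp_neg_two_pi_I_mul, one_mul,
        ← ofReal_neg, ← ofReal_pow, ← ofReal_mul, Complex.norm_exp_ofReal]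
  calc ∫ y : ℝ, cexp (-ε * y ^ 2) * ∫ X : ℝ, cexp (-2 * π * I * (x - X) * y) * g X
      = ∫ X : ℝ, ∫ y : ℝ, cexp (-ε * y ^ 2) * (cexp (-2 * π * I * (x - X) * y) * g X) := by
        simp_rw [← integral_const_mul]
        exact integral_integral_swap hF
    _ = ∫ X : ℝ, (∫ y : ℝ, cexp (-ε * y ^ 2) * cexp (-2 * π * I * (x - X) * y)) * g X := by
        simp_rw [← mul_assoc, integral_mul_const]
    _ = _ := by
        simp_rw [integral_gaussian_mul_fourierChar hε]

lemma tendsto_integral_heatKernel_mul {g : ℝ → ℂ} (hg : Integrable g) {x : ℝ}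
    (hgx : ContinuousAt g x) :
    Tendsto (fun ε : ℝ => ∫ X : ℝ, (π / ε) ^ (1 / 2 : ℂ) * cexp (-π ^ 2 * (x - X) ^ 2 / ε) * g X)
      (nhdsWithin 0 (Set.Ioi 0)) (nhds (g x)) := by
  refine ((Real.tendsto_integral_gaussian_smul' hg hgx).comp tendsto_inv_nhdsGT_zero).congr
    fun ε => ?_
  simp only [Function.comp_apply, Module.finrank_self, smul_eq_mul]
  congr 1 with X
  rw [Real.norm_eq_abs, ← ofReal_pow (|x - X|), sq_abs]
  push_cast
  ring_nf

theorem kernel_delta_identity_general (a : ℝ) (f : ℝ → ℂ) (hf : InW f) (x : ℝ) :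
    Tendsto
      (fun ε : ℝ => ∫ y : ℝ,
        Complex.exp (-(ε : ℂ) * (y : ℂ) ^ 2) * ∫ X : ℝ, kker a x y * Kker a X y * f X)
      (nhdsWithin 0 (Set.Ioi 0)) (nhds (f x)) := by
  obtain ⟨hcont, hint⟩ := hf.mem_expQuadIntegrable
  set g : ℝ → ℂ := fun X => cexp (π * I * (x ^ 2 - X ^ 2) + 2 * π * a * (x - X)) * f X
  have hg : Integrable g := by
    refine ((hint (π * I) (-2 * π * a) (by simp)).const_mul
      (cexp (π * I * x ^ 2 + 2 * π * a * x))).congr (ae_of_all _ fun X => ?_)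
    simp only [g, ← mul_assoc, ← Complex.exp_add]
    ring_nf
  have hgx : g x = f x := by simp [g]
  rw [← hgx]
  refine (tendsto_integral_heatKernel_mul hg (by fun_prop)).congr' ?_
  filter_upwards [self_mem_nhdsWithin] with ε hε
  have hkK (y X : ℝ) : kker a x y * Kker a X y * f X = cexp (-2 * π * I * (x - X) * y) * g X := by
    rw [kker_mul_Kker, mul_assoc]
  simp_rw [hkK]
  exact (integral_gaussian_mul_integral_fourierChar hg hε x).symm

/-- `∫ k(x,y) K(X,y) dy = δ(x-X)` as distributions on the Gaussian test class `W`: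
for every `f ∈ W`, the Gaussian-regularized iterated integral
`∫ (∫ k(x,y) K(X,y) f(X) dX) dy` equals `f(x)`. -/
theorem kernel_delta_identity (a : ℝ) (ha : 0 < a) (f : ℝ → ℂ) (hf : InW f) (x : ℝ) :
    Tendsto
      (fun ε : ℝ => ∫ y : ℝ,
        Complex.exp (-(ε : ℂ) * (y : ℂ) ^ 2) * ∫ X : ℝ, kker a x y * Kker a X y * f X)
      (nhdsWithin 0 (Set.Ioi 0)) (nhds (f x)) :=
  kernel_delta_identity_general a f hf x
end

section
/- Let A be the unitary operator on L²(ℝ) with integral kernel c₀ J(α,β) where c₀ = e^{-πi/12}/√3 and J(α,β) = e^{πi(2α²/3 + 2αβ/3 - β²/3)}, i.e. (Aφ)(β) = c₀ ∫ J(α,β) φ(α) dα on test functions. Then for every real m: A ∘ e^{2πim(-2x/3 - p)} = e^{2πim x/3} ∘ A and A ∘ e^{2πim x/3} = e^{2πim(x/3 + p)} ∘ A on the Gaussian-polynomial test space, where x is multiplication by the variable and p = (1/2πi) d/dx, so e^{2πimp} is translation f(x) ↦ f(x+m). -/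
open MeasureTheory Real Complex

/-- The kernel `J(α,β) = e^{πi(2α²/3 + 2αβ/3 - β²/3)}`. -/
noncomputable def Jker (α β : ℝ) : ℂ :=
  Complex.exp ((π : ℂ) * Complex.I *
    (2 * (α : ℂ) ^ 2 / 3 + 2 * (α : ℂ) * β / 3 - (β : ℂ) ^ 2 / 3))

/-- The operator `A` with kernel `c₀ J(α,β)`, `c₀ = e^{-πi/12}/√3`. -/
noncomputable def Aop (φ : ℝ → ℂ) : ℝ → ℂ := fun β =>
  (Complex.exp (-(π : ℂ) * Complex.I / 12) / (Real.sqrt 3 : ℂ)) * ∫ α : ℝ, Jker α β * φ α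

/-- The Weyl operator `e^{2πim(a·x + b·p)} f(x) = e^{πim²ab} e^{2πimax} f(x + mb)`,
where `p = (1/2πi) d/dx` so that `e^{2πimp}` is translation by `m`. -/
noncomputable def Weyl (a b m : ℝ) (f : ℝ → ℂ) : ℝ → ℂ := fun x =>
  Complex.exp ((π : ℂ) * Complex.I * m ^ 2 * a * b) *
    Complex.exp (2 * (π : ℂ) * Complex.I * m * a * x) * f (x + m * b)

lemma key1 (m α β : ℝ) (f : ℝ → ℂ) :
    Jker α β * Weyl (-2/3) (-1) m f α =
      Complex.exp (2 * (π : ℂ) * Complex.I * m * β / 3) * (Jker (α - m) β * f (α - m)) := by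
  simp only [Jker, Weyl]
  have h : α + m * (-1 : ℝ) = α - m := by ring
  rw [h]
  simp only [← mul_assoc, ← Complex.exp_add]
  congr 2
  push_cast
  ring

lemma key2 (m α β : ℝ) (f : ℝ → ℂ) :
    Jker α β * (Complex.exp (2 * (π : ℂ) * Complex.I * m * α / 3) * f α) =
      (Complex.exp ((π : ℂ) * Complex.I * m ^ 2 * (1/3) * 1) *
        Complex.exp (2 * (π : ℂ) * Complex.I * m * (1/3) * β)) * (Jker α (β + m) * f α) := by
  simp only [Jker]
  simp only [← mul_assoc, ← Complex.exp_add]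
  congr 2
  push_cast
  ring

/-- `A ∘ e^{2πim(-2x/3 - p)} = e^{2πimx/3} ∘ A` and
`A ∘ e^{2πimx/3} = e^{2πim(x/3 + p)} ∘ A` on the Gaussian test space. -/
theorem Aop_intertwining (m : ℝ) (f : ℝ → ℂ) (hf : InW f) (β : ℝ) :
    Aop (Weyl (-2/3) (-1) m f) β = Complex.exp (2 * (π : ℂ) * Complex.I * m * β / 3) * Aop f β ∧
    Aop (fun t : ℝ => Complex.exp (2 * (π : ℂ) * Complex.I * m * t / 3) * f t) β =
      Weyl (1/3) 1 m (Aop f) β := by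
  constructor
  · have h1 : (∫ α : ℝ, Jker α β * Weyl (-2/3) (-1) m f α) =
        Complex.exp (2 * (π : ℂ) * Complex.I * m * β / 3) * ∫ α : ℝ, Jker α β * f α := by
      calc (∫ α : ℝ, Jker α β * Weyl (-2/3) (-1) m f α)
          = ∫ α : ℝ, Complex.exp (2 * (π : ℂ) * Complex.I * m * β / 3) *
              (Jker (α - m) β * f (α - m)) := by
            simp only [key1]
        _ = Complex.exp (2 * (π : ℂ) * Complex.I * m * β / 3) *
              ∫ α : ℝ, Jker (α - m) β * f (α - m) := integral_const_mul _ _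
        _ = Complex.exp (2 * (π : ℂ) * Complex.I * m * β / 3) *
              ∫ α : ℝ, Jker α β * f α := by
            rw [integral_sub_right_eq_self (fun α => Jker α β * f α) m]
    simp only [Aop, h1]
    ring
  · have h2 : (∫ α : ℝ, Jker α β *
        (Complex.exp (2 * (π : ℂ) * Complex.I * m * α / 3) * f α)) =
        (Complex.exp ((π : ℂ) * Complex.I * m ^ 2 * (1/3) * 1) *
          Complex.exp (2 * (π : ℂ) * Complex.I * m * (1/3) * β)) *
          ∫ α : ℝ, Jker α (β + m) * f α := by
      simp only [key2]
      exact integral_const_mul _ _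
    have h3 : β + m * (1 : ℝ) = β + m := by ring
    simp only [Aop, Weyl, h2, h3]
    push_cast
    ring
end
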